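/- Let T : h → g be a nonabelian embedding tensor on a Lie algebra g with respect to a coherent action (h;ρ). Define ρ^L, ρ^R : h → gl(g) by ρ^L(u)y = [Tu, y]_g and ρ^R(v)x = [x, Tv]_g − T(ρ(x)v). Then (g; ρ^L, ρ^R) is a representation of the descendent Leibniz algebra (h,[-,-]_T), where [u,v]_T = ρ(Tu)v + [u,v]_h; that is, for all u,v ∈ h: ρ^L([u,v]_T) = ρ^L(u)∘ρ^L(v) − ρ^L(v)∘ρ^L(u), ρ^R([u,v]_T) = ρ^L(u)∘ρ^R(v) − ρ^R(v)∘ρ^L(u), and ρ^R(v)∘ρ^L(u) = −ρ^R(v)∘ρ^R(u). -/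
import Mathlib


variable {k : Type*} [Field k]
variable {g : Type*} [LieRing g] [LieAlgebra k g]
variable {h : Type*} [LieRing h] [LieAlgebra k h]

/-- The descendent bracket `[u,v]_T = ρ(Tu)v + [u,v]_h`. -/
def descBracket (ρ : g →ₗ[k] h →ₗ[k] h) (T : h →ₗ[k] g) (u v : h) : h :=
  ρ (T u) v + ⁅u, v⁆

/-- for a nonabelian embedding tensor `T`, the maps
`ρ^L(u)y = [Tu,y]` and `ρ^R(v)x = [x,Tv] − T(ρ(x)v)` make `g` a representation of the
descendent Leibniz algebra `(h,[-,-]_T)`. -/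
theorem descendent_representation (ρ : g →ₗ[k] h →ₗ[k] h)
    (hρ_der : ∀ (x : g) (u v : h), ρ x ⁅u, v⁆ = ⁅ρ x u, v⁆ + ⁅u, ρ x v⁆)
    (hρ_hom : ∀ (x y : g) (u : h), ρ ⁅x, y⁆ u = ρ x (ρ y u) - ρ y (ρ x u))
    (hρ_coh : ∀ (x : g) (u v : h), ⁅ρ x u, v⁆ = (0 : h))
    (T : h →ₗ[k] g)
    (hT : ∀ u v : h, ⁅T u, T v⁆ = T (ρ (T u) v + ⁅u, v⁆)) :
    -- ρ^L([u,v]_T) = [ρ^L(u), ρ^L(v)]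
    (∀ (u v : h) (y : g),
      ⁅T (descBracket ρ T u v), y⁆ = ⁅T u, ⁅T v, y⁆⁆ - ⁅T v, ⁅T u, y⁆⁆) ∧
    -- ρ^R([u,v]_T) = [ρ^L(u), ρ^R(v)]
    (∀ (u v : h) (x : g),
      ⁅x, T (descBracket ρ T u v)⁆ - T (ρ x (descBracket ρ T u v)) =
        ⁅T u, ⁅x, T v⁆ - T (ρ x v)⁆ - (⁅⁅T u, x⁆, T v⁆ - T (ρ ⁅T u, x⁆ v))) ∧
    -- ρ^R(v) ∘ ρ^L(u) = − ρ^R(v) ∘ ρ^R(u)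
    (∀ (u v : h) (x : g),
      ⁅⁅T u, x⁆, T v⁆ - T (ρ ⁅T u, x⁆ v) =
        -(⁅⁅x, T u⁆ - T (ρ x u), T v⁆ - T (ρ (⁅x, T u⁆ - T (ρ x u)) v))) := by
  refine ⟨?_, ?_, ?_⟩
  · intro u v y
    rw [descBracket, ← hT, lie_lie]
  · intro u v x
    have h1 : T (descBracket ρ T u v) = ⁅T u, T v⁆ := (hT u v).symm
    have h2 : ρ x (descBracket ρ T u v) = ρ x (ρ (T u) v) + ⁅u, ρ x v⁆ := by
      simp [descBracket, hρ_der, hρ_coh]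
    have h3 : ⁅T u, T (ρ x v)⁆ = T (ρ (T u) (ρ x v)) + T ⁅u, ρ x v⁆ := by
      rw [hT, map_add]
    have h4 : T (ρ ⁅T u, x⁆ v) = T (ρ (T u) (ρ x v)) - T (ρ x (ρ (T u) v)) := by
      rw [hρ_hom, map_sub]
    have h5 : ⁅⁅T u, x⁆, T v⁆ = -⁅⁅x, T u⁆, T v⁆ := by
      conv_lhs => rw [← lie_skew (T u) x]
      rw [neg_lie]
    rw [h1, h2, lie_sub, h3, h4, h5, leibniz_lie x (T u) (T v), map_add]
    abel
  · intro u v x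
    have h6 : ⁅T (ρ x u), T v⁆ = T (ρ (T (ρ x u)) v) := by
      rw [hT, hρ_coh, map_add, map_zero, add_zero]
    have h7 : ⁅⁅T u, x⁆, T v⁆ = -⁅⁅x, T u⁆, T v⁆ := by
      conv_lhs => rw [← lie_skew (T u) x]
      rw [neg_lie]
    have h8 : ρ ⁅T u, x⁆ v = -(ρ ⁅x, T u⁆ v) := by
      conv_lhs => rw [← lie_skew (T u) x]
      rw [map_neg, LinearMap.neg_apply]
    rw [h7, h8, sub_lie, h6, map_sub, LinearMap.sub_apply, map_sub, map_neg]
    abel
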